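/- arXiv:1107.5856 — 2 statements merged into one kernel-verified Lean document; each statement's English description precedes it below -/
import Mathlib

section
/- Let x0 < L, let a ∈ C²([x0,L],ℝ) with a > 0, let p ∈ C²((0,∞),ℝ), let M̄ > 0, and let ρ̄ ∈ C²([x0,L],ℝ) with ρ̄ > 0 satisfy (M̄²/(aρ̄))' + a·(p(ρ̄))' = 0 on [x0,L]. Set ū := M̄/(aρ̄) and B := (a'/a)·p'(ρ̄) − (p'(ρ̄))' + (ū²)'. Then for every x ∈ [x0,L]: B(x)·ū(x) + (ū·(p'(ρ̄) − ū²))'(x) = 0. -/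
open Set

/-- For a steady solution `ρ̄` of the reduced momentum equation with
`ū = M̄/(aρ̄)` and `B = (a'/a) p'(ρ̄) - (p'(ρ̄))' + (ū²)'`, one has
`B ū + (ū (p'(ρ̄) - ū²))' = 0` on `[x0,L]`. -/
theorem steady_B_cancellation_identity
    (x0 L : ℝ) (hx0L : x0 < L) (a p ρ : ℝ → ℝ) (M : ℝ)
    (ha : ContDiffOn ℝ 2 a (Icc x0 L))
    (hapos : ∀ x ∈ Icc x0 L, 0 < a x)
    (hp : ContDiffOn ℝ 2 p (Ioi 0))
    (hM : 0 < M)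
    (hρ : ContDiffOn ℝ 2 ρ (Icc x0 L))
    (hρpos : ∀ x ∈ Icc x0 L, 0 < ρ x)
    (hmom : ∀ x ∈ Icc x0 L,
        derivWithin (fun y => M ^ 2 / (a y * ρ y)) (Icc x0 L) x
          + a x * derivWithin (fun y => p (ρ y)) (Icc x0 L) x = 0)
    (u : ℝ → ℝ) (hu : ∀ x, u x = M / (a x * ρ x))
    (B : ℝ → ℝ)
    (hB : ∀ x, B x = (derivWithin a (Icc x0 L) x / a x) * deriv p (ρ x)
          - derivWithin (fun y => deriv p (ρ y)) (Icc x0 L) x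
          + derivWithin (fun y => u y ^ 2) (Icc x0 L) x) :
    ∀ x ∈ Icc x0 L,
      B x * u x
        + derivWithin (fun y => u y * (deriv p (ρ y) - u y ^ 2)) (Icc x0 L) x
        = 0 := by
  have hueq : u = fun y => M / (a y * ρ y) := funext hu
  subst hueq
  intro x hx
  have huniq : UniqueDiffWithinAt ℝ (Icc x0 L) x := (uniqueDiffOn_Icc hx0L) x hx
  have hA : 0 < a x := hapos x hx
  have hR : 0 < ρ x := hρpos x hx
  have hAR : a x * ρ x ≠ 0 := by positivity
  have hda : DifferentiableWithinAt ℝ a (Icc x0 L) x :=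
    ha.differentiableOn (by norm_num) x hx
  have hdρ : DifferentiableWithinAt ℝ ρ (Icc x0 L) x :=
    hρ.differentiableOn (by norm_num) x hx
  set A' := derivWithin a (Icc x0 L) x with hA'
  set R' := derivWithin ρ (Icc x0 L) x with hR'
  have hARh : HasDerivWithinAt (fun y => a y * ρ y) (A' * ρ x + a x * R') (Icc x0 L) x :=
    hda.hasDerivWithinAt.mul hdρ.hasDerivWithinAt
  -- derivative of u
  have hUh : HasDerivWithinAt (fun y => M / (a y * ρ y))
      ((0 * (a x * ρ x) - M * (A' * ρ x + a x * R')) / (a x * ρ x) ^ 2) (Icc x0 L) x :=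
    (hasDerivWithinAt_const x _ M).div hARh hAR
  set D := (0 * (a x * ρ x) - M * (A' * ρ x + a x * R')) / (a x * ρ x) ^ 2 with hD
  -- derivative of p ∘ ρ
  have hpd : HasDerivAt p (deriv p (ρ x)) (ρ x) :=
    ((hp.contDiffAt (isOpen_Ioi.mem_nhds hR)).differentiableAt (by norm_num)).hasDerivAt
  set c := deriv p (ρ x) with hc
  have hPh : HasDerivWithinAt (fun y => p (ρ y)) (c * R') (Icc x0 L) x :=
    hpd.comp_hasDerivWithinAt x hdρ.hasDerivWithinAt
  -- momentum in terms of D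
  have hM2 : (fun y => M ^ 2 / (a y * ρ y)) = fun y => M * (M / (a y * ρ y)) := by
    funext y; rw [sq, mul_div_assoc]
  have hmomx : M * D + a x * (c * R') = 0 := by
    have h1 : derivWithin (fun y => M ^ 2 / (a y * ρ y)) (Icc x0 L) x = M * D := by
      rw [hM2]; exact (hUh.const_mul M).derivWithin huniq
    have h2 : derivWithin (fun y => p (ρ y)) (Icc x0 L) x = c * R' := hPh.derivWithin huniq
    have := hmom x hx
    rw [h1, h2] at this
    exact this
  -- differentiability of deriv p ∘ ρ
  have hdp1 : ContDiffOn ℝ 1 (deriv p) (Ioi 0) :=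
    hp.deriv_of_isOpen isOpen_Ioi (by norm_num)
  have hdp : DifferentiableOn ℝ (deriv p) (Ioi 0) := hdp1.differentiableOn (by norm_num)
  have hCd : DifferentiableWithinAt ℝ (fun y => deriv p (ρ y)) (Icc x0 L) x :=
    (hdp.differentiableAt (isOpen_Ioi.mem_nhds hR)).comp_differentiableWithinAt x hdρ
  set C' := derivWithin (fun y => deriv p (ρ y)) (Icc x0 L) x with hC'
  have hCh : HasDerivWithinAt (fun y => deriv p (ρ y)) C' (Icc x0 L) x :=
    hCd.hasDerivWithinAt
  -- derivative of u^2
  have hQh : HasDerivWithinAt (fun y => (M / (a y * ρ y)) ^ 2)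
      ((2 : ℝ) * (M / (a x * ρ x)) ^ (2 - 1) * D) (Icc x0 L) x := by
    exact_mod_cast hUh.pow 2
  have hQd : derivWithin (fun y => (M / (a y * ρ y)) ^ 2) (Icc x0 L) x
      = (2 : ℝ) * (M / (a x * ρ x)) ^ (2 - 1) * D := hQh.derivWithin huniq
  -- derivative of u * (p'(ρ) - u^2)
  have hFh : HasDerivWithinAt
      (fun y => (M / (a y * ρ y)) * (deriv p (ρ y) - (M / (a y * ρ y)) ^ 2))
      (D * (c - (M / (a x * ρ x)) ^ 2)
        + (M / (a x * ρ x)) * (C' - (2 : ℝ) * (M / (a x * ρ x)) ^ (2 - 1) * D))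
      (Icc x0 L) x := hUh.mul (hCh.sub hQh)
  have hFd := hFh.derivWithin huniq
  beta_reduce
  rw [hB x]
  beta_reduce
  rw [hFd, hQd, ← hc, ← hA', ← hC']
  have hAne : a x ≠ 0 := ne_of_gt hA
  have hRne : ρ x ≠ 0 := ne_of_gt hR
  rw [hD] at hmomx ⊢
  norm_num at hmomx ⊢
  linear_combination (norm := (field_simp; ring1)) (-(M) / (a x ^ 2 * ρ x ^ 2)) * hmomx
end

section
/- Let a, p be C^∞ and let ρ̄₋, ρ̄₊ ∈ C^∞((x0−δ₀, x0+δ₀),ℝ) be positive with a > 0, p' > 0 on the relevant ranges; fix M̄ > 0; assume both ρ̄₋ and ρ̄₊ satisfy the steady momentum equation (M̄²/(aρ̄))' + a·(p(ρ̄))' = 0 on (x0−δ₀, x0+δ₀); assume the Rankine–Hugoniot condition at x0: p(ρ̄₊(x0)) + M̄²/(a(x0)²ρ̄₊(x0)) = p(ρ̄₋(x0)) + M̄²/(a(x0)²ρ̄₋(x0)); and assume ρ̄₊(x0) ≠ ρ̄₋(x0). Set ū± := M̄/(aρ̄±). Define G(μ, r, σ) := [ p(ρ̄₊(x0+σ)+r)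 + (M̄+μ)²/(a(x0+σ)²·(ρ̄₊(x0+σ)+r)) − p(ρ̄₋(x0+σ)) − M̄²/(a(x0+σ)²·ρ̄₋(x0+σ)) ] · (ρ̄₊(x0+σ)+r − ρ̄₋(x0+σ)) − (μ/a(x0+σ))². Then there are a neighborhood U of (0,0) in ℝ² and a C¹ function 𝒜₁ : U → ℝ with 𝒜₁(0,0) = 0 and G(𝒜₁(r,σ), r, σ) = 0 on U, whose partial derivatives at (0,0) are ∂𝒜₁/∂r(0,0) = −[a·(p'(ρ̄₊)−ū₊²)/(2ū₊)](x0) and ∂𝒜₁/∂σ(0,0) = −[a'·ū₋·(ρ̄₊−ρ̄₋)/2](x0). Moreover the function 𝒜₂(r,σ) := 𝒜₁(r,σ)/[a(x0+σ)·(ρ̄₊(x0+σ)+r−ρ̄₋(x0+σ))] satisfies 𝒜₂(0,0) = 0, ∂𝒜₂/∂r(0,0) = −[(p'(ρ̄₊)−ū₊²)/(2ū₊·(ρ̄₊−ρ̄₋))](x0), and ∂𝒜₂/∂σ(0,0) = −[a'·ū₋/(2a)](x0). -/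
open Set

noncomputable section

/-- The algebraic Rankine–Hugoniot function `G(μ,r,σ)` for a perturbed shock at
`x0 + σ` with right density `ρ̄₊(x0+σ) + r` and right mass flux `M̄ + μ`. -/
def RHfun (x0 M : ℝ) (a p ρm ρp : ℝ → ℝ) (μ r σ : ℝ) : ℝ :=
  (p (ρp (x0 + σ) + r) + (M + μ) ^ 2 / (a (x0 + σ) ^ 2 * (ρp (x0 + σ) + r))
      - p (ρm (x0 + σ)) - M ^ 2 / (a (x0 + σ) ^ 2 * ρm (x0 + σ)))
    * (ρp (x0 + σ) + r - ρm (x0 + σ))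
    - (μ / a (x0 + σ)) ^ 2

end

noncomputable def Cfn (x0 M : ℝ) (a p ρm ρp : ℝ → ℝ) (q : ℝ × ℝ) : ℝ :=
  (p (ρp (x0 + q.2) + q.1) + M ^ 2 / (a (x0 + q.2) ^ 2 * (ρp (x0 + q.2) + q.1))
      - p (ρm (x0 + q.2)) - M ^ 2 / (a (x0 + q.2) ^ 2 * ρm (x0 + q.2)))
    * (ρp (x0 + q.2) + q.1 - ρm (x0 + q.2))

noncomputable def Bfn (x0 M : ℝ) (a ρm ρp : ℝ → ℝ) (q : ℝ × ℝ) : ℝ :=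
  2 * M * (ρp (x0 + q.2) + q.1 - ρm (x0 + q.2)) / (a (x0 + q.2) ^ 2 * (ρp (x0 + q.2) + q.1))

noncomputable def Afn (x0 : ℝ) (a ρm ρp : ℝ → ℝ) (q : ℝ × ℝ) : ℝ :=
  -(ρm (x0 + q.2)) / (a (x0 + q.2) ^ 2 * (ρp (x0 + q.2) + q.1))

noncomputable def Dfn (x0 M : ℝ) (a p ρm ρp : ℝ → ℝ) (q : ℝ × ℝ) : ℝ :=
  Bfn x0 M a ρm ρp q ^ 2 - 4 * Afn x0 a ρm ρp q * Cfn x0 M a p ρm ρp q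

noncomputable def gfn (x0 M sg : ℝ) (a p ρm ρp : ℝ → ℝ) (q : ℝ × ℝ) : ℝ :=
  Bfn x0 M a ρm ρp q + sg * Real.sqrt (Dfn x0 M a p ρm ρp q)

lemma quadRoot (A B C s d : ℝ) (hs : s ^ 2 = 1) (hd : d ^ 2 = B ^ 2 - 4 * A * C)
    (hg : B + s * d ≠ 0) :
    A * (-2 * C / (B + s * d)) ^ 2 + B * (-2 * C / (B + s * d)) + C = 0 := by
  field_simp
  linear_combination C*d^2 * hs + C * hd

lemma hasDerivAt_neg2_div (c g : ℝ → ℝ) (c' g' : ℝ) (hc : HasDerivAt c c' 0)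
    (hg : HasDerivAt g g' 0) (hc0 : c 0 = 0) (hg0 : g 0 ≠ 0) :
    HasDerivAt (fun x => -2 * c x / g x) (-2 * c' / g 0) 0 := by
  have h := (hc.const_mul (-2)).div hg hg0
  refine h.congr_deriv ?_
  rw [hc0]
  field_simp
  ring

lemma hasDerivAt_shift (f : ℝ → ℝ) (f' x0 : ℝ) (hf : HasDerivAt f f' x0) :
    HasDerivAt (fun σ => f (x0 + σ)) f' 0 := by
  have h1 : HasDerivAt (fun σ : ℝ => x0 + σ) 1 0 := by
    simpa using (hasDerivAt_id (0:ℝ)).const_add x0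
  have hf' : HasDerivAt f f' ((fun σ : ℝ => x0 + σ) 0) := by simpa using hf
  exact (hf'.comp 0 h1).congr_deriv (mul_one _)


set_option maxHeartbeats 1000000 in
/-- Solvability of the Rankine–Hugoniot relation for the mass-flux
jump `𝒜₁(r,σ)` near the background shock, with the stated partial derivatives at
`(0,0)`, and the corresponding properties of the shock-speed function
`𝒜₂ = 𝒜₁/(a(ρ₊ - ρ̄₋))`. -/
theorem rankine_hugoniot_implicit_function
    (x0 δ0 : ℝ) (hδ0 : 0 < δ0) (a p ρm ρp : ℝ → ℝ) (M : ℝ) (hM : 0 < M)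
    (ha : ContDiff ℝ (⊤ : ℕ∞) a)
    (hapos : ∀ x ∈ Ioo (x0 - δ0) (x0 + δ0), 0 < a x)
    (hp : ContDiffOn ℝ (⊤ : ℕ∞) p (Ioi 0))
    (hp' : ∀ ρ ∈ Ioi (0:ℝ), 0 < deriv p ρ)
    (hρm : ContDiffOn ℝ (⊤ : ℕ∞) ρm (Ioo (x0 - δ0) (x0 + δ0)))
    (hρmpos : ∀ x ∈ Ioo (x0 - δ0) (x0 + δ0), 0 < ρm x)
    (hρp : ContDiffOn ℝ (⊤ : ℕ∞) ρp (Ioo (x0 - δ0) (x0 + δ0)))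
    (hρppos : ∀ x ∈ Ioo (x0 - δ0) (x0 + δ0), 0 < ρp x)
    (hmomm : ∀ x ∈ Ioo (x0 - δ0) (x0 + δ0),
        deriv (fun y => M ^ 2 / (a y * ρm y)) x
          + a x * deriv (fun y => p (ρm y)) x = 0)
    (hmomp : ∀ x ∈ Ioo (x0 - δ0) (x0 + δ0),
        deriv (fun y => M ^ 2 / (a y * ρp y)) x
          + a x * deriv (fun y => p (ρp y)) x = 0)
    (hRH : p (ρp x0) + M ^ 2 / (a x0 ^ 2 * ρp x0)
        = p (ρm x0) + M ^ 2 / (a x0 ^ 2 * ρm x0))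
    (hne : ρp x0 ≠ ρm x0) :
    ∃ U ∈ nhds ((0 : ℝ), (0 : ℝ)), ∃ A1 : ℝ → ℝ → ℝ,
      ContDiffOn ℝ 1 (fun q : ℝ × ℝ => A1 q.1 q.2) U ∧
      A1 0 0 = 0 ∧
      (∀ q ∈ U, RHfun x0 M a p ρm ρp (A1 q.1 q.2) q.1 q.2 = 0) ∧
      HasDerivAt (fun r => A1 r 0)
        (-(a x0 * (deriv p (ρp x0) - (M / (a x0 * ρp x0)) ^ 2)
            / (2 * (M / (a x0 * ρp x0))))) 0 ∧
      HasDerivAt (fun σ => A1 0 σ)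
        (-(deriv a x0 * (M / (a x0 * ρm x0)) * (ρp x0 - ρm x0) / 2)) 0 ∧
      A1 0 0 / (a x0 * (ρp x0 - ρm x0)) = 0 ∧
      HasDerivAt (fun r => A1 r 0 / (a x0 * (ρp x0 + r - ρm x0)))
        (-((deriv p (ρp x0) - (M / (a x0 * ρp x0)) ^ 2)
            / (2 * (M / (a x0 * ρp x0)) * (ρp x0 - ρm x0)))) 0 ∧
      HasDerivAt (fun σ => A1 0 σ / (a (x0 + σ) * (ρp (x0 + σ) - ρm (x0 + σ))))
        (-(deriv a x0 * (M / (a x0 * ρm x0)) / (2 * a x0))) 0 := by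
  have hx0 : x0 ∈ Ioo (x0 - δ0) (x0 + δ0) := ⟨by linarith, by linarith⟩
  have ha0 : 0 < a x0 := hapos x0 hx0
  have hRp : 0 < ρp x0 := hρppos x0 hx0
  have hRm : 0 < ρm x0 := hρmpos x0 hx0
  have hMne : M ≠ 0 := hM.ne'
  have ha0ne : a x0 ≠ 0 := ha0.ne'
  have hRpne : ρp x0 ≠ 0 := hRp.ne'
  have hRmne : ρm x0 ≠ 0 := hRm.ne'
  have hΔne : ρp x0 - ρm x0 ≠ 0 := sub_ne_zero.2 hne
  set sg : ℝ := if ρm x0 < ρp x0 then 1 else -1 with hsgdef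
  have hsg2 : sg ^ 2 = 1 := by rw [hsgdef]; split_ifs <;> norm_num
  -- origin values
  have hC0 : Cfn x0 M a p ρm ρp (0, 0) = 0 := by
    have hbr : p (ρp x0) + M ^ 2 / (a x0 ^ 2 * ρp x0) - p (ρm x0)
        - M ^ 2 / (a x0 ^ 2 * ρm x0) = 0 := by linarith
    simp only [Cfn, add_zero]
    rw [hbr, zero_mul]
  have hB0 : Bfn x0 M a ρm ρp (0, 0) = 2 * M * (ρp x0 - ρm x0) / (a x0 ^ 2 * ρp x0) := by
    simp [Bfn]
  have hB0ne : Bfn x0 M a ρm ρp (0, 0) ≠ 0 := by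
    rw [hB0]
    exact div_ne_zero (mul_ne_zero (by positivity) hΔne) (by positivity)
  have hD00 : Dfn x0 M a p ρm ρp (0, 0) = Bfn x0 M a ρm ρp (0, 0) ^ 2 := by
    rw [Dfn, hC0]; ring
  have hDpos0 : 0 < Dfn x0 M a p ρm ρp (0, 0) := by
    rw [hD00]
    exact lt_of_le_of_ne (sq_nonneg _) (Ne.symm (pow_ne_zero 2 hB0ne))
  have hsq0 : Real.sqrt (Dfn x0 M a p ρm ρp (0, 0)) = sg * Bfn x0 M a ρm ρp (0, 0) := by
    rw [hD00, Real.sqrt_sq_eq_abs, hsgdef]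
    have hden : (0:ℝ) < a x0 ^ 2 * ρp x0 := by positivity
    split_ifs with h
    · rw [one_mul, abs_of_pos]
      rw [hB0]
      exact div_pos (by nlinarith) hden
    · have h2 : ρp x0 < ρm x0 := lt_of_le_of_ne (not_lt.1 h) hne
      rw [abs_of_neg, neg_one_mul]
      rw [hB0]
      apply div_neg_of_neg_of_pos _ hden
      nlinarith
  have hg00 : gfn x0 M sg a p ρm ρp (0, 0) = 2 * Bfn x0 M a ρm ρp (0, 0) := by
    rw [gfn, hsq0]
    linear_combination Bfn x0 M a ρm ρp (0, 0) * hsg2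
  have hg00ne : gfn x0 M sg a p ρm ρp (0, 0) ≠ 0 := by
    rw [hg00]; exact mul_ne_zero two_ne_zero hB0ne
  -- neighbourhood construction
  have hafc : ContDiff ℝ (⊤ : ℕ∞) (fun q : ℝ × ℝ => x0 + q.2) := contDiff_const.add contDiff_snd
  set W1 : Set (ℝ × ℝ) := (fun q : ℝ × ℝ => x0 + q.2) ⁻¹' Ioo (x0 - δ0) (x0 + δ0) with hW1def
  have hW1o : IsOpen W1 := isOpen_Ioo.preimage hafc.continuous
  have hρPc : ContDiffOn ℝ (⊤ : ℕ∞) (fun q : ℝ × ℝ => ρp (x0 + q.2) + q.1) W1 :=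
    (hρp.comp hafc.contDiffOn fun q hq => hq).add contDiff_fst.contDiffOn
  have hρMc : ContDiffOn ℝ (⊤ : ℕ∞) (fun q : ℝ × ℝ => ρm (x0 + q.2)) W1 :=
    hρm.comp hafc.contDiffOn fun q hq => hq
  have haac : ContDiff ℝ (⊤ : ℕ∞) (fun q : ℝ × ℝ => a (x0 + q.2)) := ha.comp hafc
  set W2 : Set (ℝ × ℝ) := W1 ∩ (fun q : ℝ × ℝ => ρp (x0 + q.2) + q.1) ⁻¹' Ioi 0 with hW2def
  have hW2o : IsOpen W2 := hρPc.continuousOn.isOpen_inter_preimage hW1o isOpen_Ioi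
  have hW2sub : W2 ⊆ W1 := inter_subset_left
  have haqpos : ∀ q ∈ W2, 0 < a (x0 + q.2) := fun q hq => hapos _ hq.1
  have hρPqpos : ∀ q ∈ W2, 0 < ρp (x0 + q.2) + q.1 := fun q hq => hq.2
  have hρMqpos : ∀ q ∈ W2, 0 < ρm (x0 + q.2) := fun q hq => hρmpos _ hq.1
  have hdenPne : ∀ q ∈ W2, a (x0 + q.2) ^ 2 * (ρp (x0 + q.2) + q.1) ≠ 0 := fun q hq =>
    (mul_pos (pow_pos (haqpos q hq) 2) (hρPqpos q hq)).ne'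
  have hdenMne : ∀ q ∈ W2, a (x0 + q.2) ^ 2 * ρm (x0 + q.2) ≠ 0 := fun q hq =>
    (mul_pos (pow_pos (haqpos q hq) 2) (hρMqpos q hq)).ne'
  have hρPc2 := hρPc.mono hW2sub
  have hρMc2 := hρMc.mono hW2sub
  have haac2 : ContDiffOn ℝ (⊤ : ℕ∞) (fun q : ℝ × ℝ => a (x0 + q.2)) W2 := haac.contDiffOn
  have hppc : ContDiffOn ℝ (⊤ : ℕ∞) (fun q : ℝ × ℝ => p (ρp (x0 + q.2) + q.1)) W2 :=
    hp.comp hρPc2 fun q hq => hq.2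
  have hpmc : ContDiffOn ℝ (⊤ : ℕ∞) (fun q : ℝ × ℝ => p (ρm (x0 + q.2))) W2 :=
    hp.comp hρMc2 fun q hq => hρMqpos q hq
  have hCfc : ContDiffOn ℝ (⊤ : ℕ∞) (Cfn x0 M a p ρm ρp) W2 := by
    apply ContDiffOn.mul _ (hρPc2.sub hρMc2)
    exact ((hppc.add (contDiffOn_const.div ((haac2.pow 2).mul hρPc2) hdenPne)).sub
      hpmc).sub (contDiffOn_const.div ((haac2.pow 2).mul hρMc2) hdenMne)
  have hBfc : ContDiffOn ℝ (⊤ : ℕ∞) (Bfn x0 M a ρm ρp) W2 :=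
    (contDiffOn_const.mul (hρPc2.sub hρMc2)).div ((haac2.pow 2).mul hρPc2) hdenPne
  have hAfc : ContDiffOn ℝ (⊤ : ℕ∞) (Afn x0 a ρm ρp) W2 :=
    (hρMc2.neg).div ((haac2.pow 2).mul hρPc2) hdenPne
  have hDfc : ContDiffOn ℝ (⊤ : ℕ∞) (Dfn x0 M a p ρm ρp) W2 :=
    (hBfc.pow 2).sub ((contDiffOn_const.mul hAfc).mul hCfc)
  have hgfc : ContinuousOn (gfn x0 M sg a p ρm ρp) W2 :=
    hBfc.continuousOn.add (continuousOn_const.mul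
      (Real.continuous_sqrt.comp_continuousOn hDfc.continuousOn))
  set V2 : Set (ℝ × ℝ) := W2 ∩ Dfn x0 M a p ρm ρp ⁻¹' Ioi 0 with hV2def
  have hV2o : IsOpen V2 := hDfc.continuousOn.isOpen_inter_preimage hW2o isOpen_Ioi
  set U : Set (ℝ × ℝ) := V2 ∩ gfn x0 M sg a p ρm ρp ⁻¹' ({0}ᶜ) with hUdef
  have hUo : IsOpen U :=
    ((hgfc.mono inter_subset_left).isOpen_inter_preimage hV2o isOpen_compl_singleton)
  have h00W2 : ((0 : ℝ), (0 : ℝ)) ∈ W2 := by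
    constructor
    · show x0 + (0:ℝ) ∈ Ioo (x0 - δ0) (x0 + δ0)
      simpa using hx0
    · show ρp (x0 + (0:ℝ)) + 0 ∈ Ioi (0:ℝ)
      simpa using hRp
  have h00U : ((0 : ℝ), (0 : ℝ)) ∈ U :=
    ⟨⟨h00W2, hDpos0⟩, by simpa using hg00ne⟩
  have hUsubW2 : U ⊆ W2 := fun q hq => hq.1.1
  -- C¹ regularity of A1 on U
  have hA1CD : ContDiffOn ℝ 1
      (fun q : ℝ × ℝ => -2 * Cfn x0 M a p ρm ρp q / gfn x0 M sg a p ρm ρp q) U := by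
    intro q hq
    have hqW2 : q ∈ W2 := hUsubW2 hq
    have hCa : ContDiffAt ℝ (⊤ : ℕ∞) (Cfn x0 M a p ρm ρp) q := hCfc.contDiffAt (hW2o.mem_nhds hqW2)
    have hBa : ContDiffAt ℝ (⊤ : ℕ∞) (Bfn x0 M a ρm ρp) q := hBfc.contDiffAt (hW2o.mem_nhds hqW2)
    have hDa : ContDiffAt ℝ (⊤ : ℕ∞) (Dfn x0 M a p ρm ρp) q := hDfc.contDiffAt (hW2o.mem_nhds hqW2)
    have hDq : (0:ℝ) < Dfn x0 M a p ρm ρp q := hq.1.2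
    have hsqa : ContDiffAt ℝ (⊤ : ℕ∞) (fun x => Real.sqrt (Dfn x0 M a p ρm ρp x)) q :=
      (Real.contDiffAt_sqrt hDq.ne').comp q hDa
    have hgne : gfn x0 M sg a p ρm ρp q ≠ 0 := hq.2
    have : ContDiffAt ℝ (⊤ : ℕ∞)
        (fun x : ℝ × ℝ => -2 * Cfn x0 M a p ρm ρp x / gfn x0 M sg a p ρm ρp x) q := by
      refine (contDiffAt_const.mul hCa).div ?_ hgne
      exact hBa.add (contDiffAt_const.mul hsqa)
    exact (this.of_le (by simp)).contDiffWithinAt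
  -- root property
  have hroot : ∀ q ∈ U, RHfun x0 M a p ρm ρp
      (-2 * Cfn x0 M a p ρm ρp (q.1, q.2) / gfn x0 M sg a p ρm ρp (q.1, q.2)) q.1 q.2 = 0 := by
    intro q hq
    have hqW2 : q ∈ W2 := hUsubW2 hq
    have hane : a (x0 + q.2) ≠ 0 := (haqpos q hqW2).ne'
    have hPne : ρp (x0 + q.2) + q.1 ≠ 0 := (hρPqpos q hqW2).ne'
    have hMne' : ρm (x0 + q.2) ≠ 0 := (hρMqpos q hqW2).ne'
    have hDq : (0:ℝ) < Dfn x0 M a p ρm ρp q := hq.1.2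
    have hgne : gfn x0 M sg a p ρm ρp q ≠ 0 := hq.2
    have hexp : ∀ μ : ℝ, RHfun x0 M a p ρm ρp μ q.1 q.2 =
        Afn x0 a ρm ρp q * μ ^ 2 + Bfn x0 M a ρm ρp q * μ + Cfn x0 M a p ρm ρp q := by
      intro μ
      simp only [RHfun, Afn, Bfn, Cfn]
      field_simp
      ring
    rw [Prod.mk.eta, hexp]
    have hd : Real.sqrt (Dfn x0 M a p ρm ρp q) ^ 2 =
        Bfn x0 M a ρm ρp q ^ 2 - 4 * Afn x0 a ρm ρp q * Cfn x0 M a p ρm ρp q := by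
      rw [Real.sq_sqrt hDq.le, Dfn]
    have hgne' : Bfn x0 M a ρm ρp q + sg * Real.sqrt (Dfn x0 M a p ρm ρp q) ≠ 0 := hgne
    have := quadRoot (Afn x0 a ρm ρp q) (Bfn x0 M a ρm ρp q) (Cfn x0 M a p ρm ρp q)
      sg (Real.sqrt (Dfn x0 M a p ρm ρp q)) hsg2 hd hgne'
    convert this using 4 <;> rfl
  -- r-direction derivative of Cfn
  have hpD : HasDerivAt p (deriv p (ρp x0)) (ρp x0) :=
    (((hp.contDiffAt (isOpen_Ioi.mem_nhds hRp)).differentiableAt (by simp))).hasDerivAt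
  have h1 : HasDerivAt (fun r : ℝ => ρp x0 + r) 1 0 := by
    simpa using (hasDerivAt_id (0:ℝ)).const_add (ρp x0)
  have hcr_eq : (fun r : ℝ => Cfn x0 M a p ρm ρp (r, 0)) = fun r =>
      (p (ρp x0 + r) + M ^ 2 / (a x0 ^ 2 * (ρp x0 + r)) - p (ρm x0)
        - M ^ 2 / (a x0 ^ 2 * ρm x0)) * (ρp x0 + r - ρm x0) := by
    funext r
    simp only [Cfn, add_zero]
  have hcompp : HasDerivAt (fun r : ℝ => p (ρp x0 + r)) (deriv p (ρp x0)) 0 := by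
    have hpD0 : HasDerivAt p (deriv p (ρp x0)) ((fun r : ℝ => ρp x0 + r) 0) := by
      simpa using hpD
    exact (hpD0.comp 0 h1).congr_deriv (mul_one _)
  have hdivr : HasDerivAt (fun r : ℝ => M ^ 2 / (a x0 ^ 2 * (ρp x0 + r)))
      (-(M ^ 2 / (a x0 ^ 2 * ρp x0 ^ 2))) 0 := by
    have hden : HasDerivAt (fun r : ℝ => a x0 ^ 2 * (ρp x0 + r)) (a x0 ^ 2) 0 := by
      simpa using h1.const_mul (a x0 ^ 2)
    have hdne : a x0 ^ 2 * (ρp x0 + 0) ≠ 0 := by simpa using (mul_pos (pow_pos ha0 2) hRp).ne'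
    have := (hasDerivAt_const (0:ℝ) (M ^ 2)).div hden hdne
    refine this.congr_deriv ?_
    field_simp
    ring
  have hcr : HasDerivAt (fun r : ℝ => Cfn x0 M a p ρm ρp (r, 0))
      ((deriv p (ρp x0) - M ^ 2 / (a x0 ^ 2 * ρp x0 ^ 2)) * (ρp x0 - ρm x0)) 0 := by
    rw [hcr_eq]
    have hb : HasDerivAt (fun r : ℝ => p (ρp x0 + r) + M ^ 2 / (a x0 ^ 2 * (ρp x0 + r))
        - p (ρm x0) - M ^ 2 / (a x0 ^ 2 * ρm x0))
        (deriv p (ρp x0) + -(M ^ 2 / (a x0 ^ 2 * ρp x0 ^ 2))) 0 :=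
      ((hcompp.add hdivr).sub_const _).sub_const _
    have hl : HasDerivAt (fun r : ℝ => ρp x0 + r - ρm x0) 1 0 := h1.sub_const _
    have := hb.mul hl
    refine this.congr_deriv ?_
    have hb0 : p (ρp x0 + 0) + M ^ 2 / (a x0 ^ 2 * (ρp x0 + 0)) - p (ρm x0)
        - M ^ 2 / (a x0 ^ 2 * ρm x0) = 0 := by
      simpa using (by linarith :
        p (ρp x0) + M ^ 2 / (a x0 ^ 2 * ρp x0) - p (ρm x0) - M ^ 2 / (a x0 ^ 2 * ρm x0) = 0)
    rw [hb0]
    ring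
  -- differentiability of gfn along r and σ directions
  have hgfdiff : DifferentiableAt ℝ (gfn x0 M sg a p ρm ρp) (0, 0) := by
    have hBa : ContDiffAt ℝ (⊤ : ℕ∞) (Bfn x0 M a ρm ρp) (0,0) := hBfc.contDiffAt (hW2o.mem_nhds h00W2)
    have hDa : ContDiffAt ℝ (⊤ : ℕ∞) (Dfn x0 M a p ρm ρp) (0,0) := hDfc.contDiffAt (hW2o.mem_nhds h00W2)
    have hsqa : ContDiffAt ℝ (⊤ : ℕ∞) (fun x => Real.sqrt (Dfn x0 M a p ρm ρp x)) (0,0) :=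
      (Real.contDiffAt_sqrt hDpos0.ne').comp _ hDa
    exact ((hBa.add (contDiffAt_const.mul hsqa)).differentiableAt (by simp))
  have hgrdiff : DifferentiableAt ℝ (fun r : ℝ => gfn x0 M sg a p ρm ρp (r, 0)) 0 := by
    have hemb : DifferentiableAt ℝ (fun r : ℝ => ((r, (0:ℝ)) : ℝ × ℝ)) 0 :=
      differentiableAt_id.prodMk (differentiableAt_const _)
    exact DifferentiableAt.comp (f := fun r : ℝ => ((r, (0:ℝ)) : ℝ × ℝ)) 0 hgfdiff hemb
  have hcr0 : Cfn x0 M a p ρm ρp ((0:ℝ), (0:ℝ)) = 0 := hC0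
  have hA1r : HasDerivAt (fun r : ℝ => -2 * Cfn x0 M a p ρm ρp (r, 0) / gfn x0 M sg a p ρm ρp (r, 0))
      (-(a x0 * (deriv p (ρp x0) - (M / (a x0 * ρp x0)) ^ 2) / (2 * (M / (a x0 * ρp x0))))) 0 := by
    have h := hasDerivAt_neg2_div (fun r : ℝ => Cfn x0 M a p ρm ρp (r, 0))
      (fun r : ℝ => gfn x0 M sg a p ρm ρp (r, 0)) _ _ hcr hgrdiff.hasDerivAt hcr0 hg00ne
    convert h using 1
    rw [hg00, hB0]
    field_simp
  -- σ-direction derivative of Cfn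
  have hadiff : DifferentiableAt ℝ a x0 := (ha.differentiable (by simp)).differentiableAt
  have hρpdiff : DifferentiableAt ℝ ρp x0 :=
    (hρp.contDiffAt (isOpen_Ioo.mem_nhds hx0)).differentiableAt (by simp)
  have hρmdiff : DifferentiableAt ℝ ρm x0 :=
    (hρm.contDiffAt (isOpen_Ioo.mem_nhds hx0)).differentiableAt (by simp)
  have hpdiffp : DifferentiableAt ℝ p (ρp x0) :=
    (hp.contDiffAt (isOpen_Ioi.mem_nhds hRp)).differentiableAt (by simp)
  have hpdiffm : DifferentiableAt ℝ p (ρm x0) :=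
    (hp.contDiffAt (isOpen_Ioi.mem_nhds hRm)).differentiableAt (by simp)
  have hFpdiff : DifferentiableAt ℝ (fun y => M ^ 2 / (a y * ρp y)) x0 :=
    (differentiableAt_const _).div (hadiff.mul hρpdiff) (mul_ne_zero ha0ne hRpne)
  have hFmdiff : DifferentiableAt ℝ (fun y => M ^ 2 / (a y * ρm y)) x0 :=
    (differentiableAt_const _).div (hadiff.mul hρmdiff) (mul_ne_zero ha0ne hRmne)
  have hPpdiff : DifferentiableAt ℝ (fun y => p (ρp y)) x0 := hpdiffp.comp x0 hρpdiff
  have hPmdiff : DifferentiableAt ℝ (fun y => p (ρm y)) x0 := hpdiffm.comp x0 hρmdiff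
  have hPpc : HasDerivAt (fun σ => p (ρp (x0 + σ))) (deriv (fun y => p (ρp y)) x0) 0 :=
    hasDerivAt_shift _ _ _ hPpdiff.hasDerivAt
  have hPmc : HasDerivAt (fun σ => p (ρm (x0 + σ))) (deriv (fun y => p (ρm y)) x0) 0 :=
    hasDerivAt_shift _ _ _ hPmdiff.hasDerivAt
  have hFpc : HasDerivAt (fun σ => M ^ 2 / (a (x0 + σ) * ρp (x0 + σ)))
      (deriv (fun y => M ^ 2 / (a y * ρp y)) x0) 0 :=
    hasDerivAt_shift _ _ _ hFpdiff.hasDerivAt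
  have hFmc : HasDerivAt (fun σ => M ^ 2 / (a (x0 + σ) * ρm (x0 + σ)))
      (deriv (fun y => M ^ 2 / (a y * ρm y)) x0) 0 :=
    hasDerivAt_shift _ _ _ hFmdiff.hasDerivAt
  have hac : HasDerivAt (fun σ => a (x0 + σ)) (deriv a x0) 0 :=
    hasDerivAt_shift _ _ _ hadiff.hasDerivAt
  have hρpc : HasDerivAt (fun σ => ρp (x0 + σ)) (deriv ρp x0) 0 :=
    hasDerivAt_shift _ _ _ hρpdiff.hasDerivAt
  have hρmc : HasDerivAt (fun σ => ρm (x0 + σ)) (deriv ρm x0) 0 :=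
    hasDerivAt_shift _ _ _ hρmdiff.hasDerivAt
  have ha0ne' : (fun σ : ℝ => a (x0 + σ)) 0 ≠ 0 := by simpa using ha0ne
  have hFpa : HasDerivAt (fun σ => (M ^ 2 / (a (x0 + σ) * ρp (x0 + σ))) / a (x0 + σ))
      ((deriv (fun y => M ^ 2 / (a y * ρp y)) x0 * a x0
        - M ^ 2 / (a x0 * ρp x0) * deriv a x0) / a x0 ^ 2) 0 := by
    have h := hFpc.div hac ha0ne'; simp only [add_zero] at h; exact h
  have hFma : HasDerivAt (fun σ => (M ^ 2 / (a (x0 + σ) * ρm (x0 + σ))) / a (x0 + σ))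
      ((deriv (fun y => M ^ 2 / (a y * ρm y)) x0 * a x0
        - M ^ 2 / (a x0 * ρm x0) * deriv a x0) / a x0 ^ 2) 0 := by
    have h := hFmc.div hac ha0ne'; simp only [add_zero] at h; exact h
  have hlinσ : HasDerivAt (fun σ => ρp (x0 + σ) - ρm (x0 + σ))
      (deriv ρp x0 - deriv ρm x0) 0 := hρpc.sub hρmc
  have hcσ_eq : (fun σ : ℝ => Cfn x0 M a p ρm ρp (0, σ)) = fun σ =>
      (p (ρp (x0 + σ)) + (M ^ 2 / (a (x0 + σ) * ρp (x0 + σ))) / a (x0 + σ)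
        - p (ρm (x0 + σ)) - (M ^ 2 / (a (x0 + σ) * ρm (x0 + σ))) / a (x0 + σ))
      * (ρp (x0 + σ) - ρm (x0 + σ)) := by
    funext σ
    simp only [Cfn, add_zero]
    ring
  have hcσ : HasDerivAt (fun σ : ℝ => Cfn x0 M a p ρm ρp (0, σ))
      ((deriv (fun y => p (ρp y)) x0
        + (deriv (fun y => M ^ 2 / (a y * ρp y)) x0 * a x0
            - M ^ 2 / (a x0 * ρp x0) * deriv a x0) / a x0 ^ 2
        - deriv (fun y => p (ρm y)) x0
        - (deriv (fun y => M ^ 2 / (a y * ρm y)) x0 * a x0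
            - M ^ 2 / (a x0 * ρm x0) * deriv a x0) / a x0 ^ 2)
        * (ρp x0 - ρm x0)) 0 := by
    rw [hcσ_eq]
    have hbrσ := ((hPpc.add hFpa).sub hPmc).sub hFma
    have := hbrσ.mul hlinσ
    refine this.congr_deriv ?_
    have hbr0 : p (ρp (x0 + 0)) + (M ^ 2 / (a (x0 + 0) * ρp (x0 + 0))) / a (x0 + 0)
        - p (ρm (x0 + 0)) - (M ^ 2 / (a (x0 + 0) * ρm (x0 + 0))) / a (x0 + 0) = 0 := by
      simp only [add_zero]
      rw [div_div, div_div, show a x0 * ρp x0 * a x0 = a x0 ^ 2 * ρp x0 by ring,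
        show a x0 * ρm x0 * a x0 = a x0 ^ 2 * ρm x0 by ring]
      linarith
    simp only [Pi.add_apply, Pi.sub_apply]
    rw [hbr0]
    simp only [add_zero]
    ring
  have hgσdiff : DifferentiableAt ℝ (fun σ : ℝ => gfn x0 M sg a p ρm ρp (0, σ)) 0 := by
    have hemb : DifferentiableAt ℝ (fun σ : ℝ => (((0:ℝ), σ) : ℝ × ℝ)) 0 :=
      (differentiableAt_const _).prodMk differentiableAt_id
    exact DifferentiableAt.comp
      (f := fun σ : ℝ => (((0:ℝ), σ) : ℝ × ℝ)) 0 hgfdiff hemb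
  have hppval : deriv (fun y => p (ρp y)) x0
      = -(deriv (fun y => M ^ 2 / (a y * ρp y)) x0) / a x0 := by
    have h := hmomp x0 hx0
    rw [eq_div_iff ha0ne]
    linarith
  have hpmval : deriv (fun y => p (ρm y)) x0
      = -(deriv (fun y => M ^ 2 / (a y * ρm y)) x0) / a x0 := by
    have h := hmomm x0 hx0
    rw [eq_div_iff ha0ne]
    linarith
  have hA1σ : HasDerivAt
      (fun σ : ℝ => -2 * Cfn x0 M a p ρm ρp (0, σ) / gfn x0 M sg a p ρm ρp (0, σ))
      (-(deriv a x0 * (M / (a x0 * ρm x0)) * (ρp x0 - ρm x0) / 2)) 0 := by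
    have h := hasDerivAt_neg2_div (fun σ : ℝ => Cfn x0 M a p ρm ρp (0, σ))
      (fun σ : ℝ => gfn x0 M sg a p ρm ρp (0, σ)) _ _ hcσ hgσdiff.hasDerivAt hC0 hg00ne
    convert h using 1
    rw [hg00, hB0, hppval, hpmval]
    field_simp
    ring
  -- A1 at origin
  have hA100 : -2 * Cfn x0 M a p ρm ρp ((0:ℝ), (0:ℝ)) / gfn x0 M sg a p ρm ρp (0, 0) = 0 := by
    rw [hC0]; simp
  -- A2 r-derivative
  have hden7 : HasDerivAt (fun r : ℝ => a x0 * (ρp x0 + r - ρm x0)) (a x0) 0 := by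
    simpa using (h1.sub_const (ρm x0)).const_mul (a x0)
  have hden70 : (fun r : ℝ => a x0 * (ρp x0 + r - ρm x0)) 0 ≠ 0 := by
    simp only [add_zero]
    exact mul_ne_zero ha0ne hΔne
  have hA2r : HasDerivAt (fun r : ℝ =>
      (-2 * Cfn x0 M a p ρm ρp (r, 0) / gfn x0 M sg a p ρm ρp (r, 0))
        / (a x0 * (ρp x0 + r - ρm x0)))
      (-((deriv p (ρp x0) - (M / (a x0 * ρp x0)) ^ 2)
          / (2 * (M / (a x0 * ρp x0)) * (ρp x0 - ρm x0)))) 0 := by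
    have h := hA1r.div hden7 hden70
    refine h.congr_deriv ?_
    beta_reduce
    rw [hA100]
    simp only [add_zero, mul_zero, zero_mul, sub_zero]
    field_simp
  -- A2 σ-derivative
  have hden8 : HasDerivAt (fun σ : ℝ => a (x0 + σ) * (ρp (x0 + σ) - ρm (x0 + σ)))
      (deriv a x0 * (ρp x0 - ρm x0) + a x0 * (deriv ρp x0 - deriv ρm x0)) 0 := by
    have h := hac.mul hlinσ; simp only [add_zero] at h; exact h
  have hden80 : (fun σ : ℝ => a (x0 + σ) * (ρp (x0 + σ) - ρm (x0 + σ))) 0 ≠ 0 := by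
    simp only [add_zero]
    exact mul_ne_zero ha0ne hΔne
  have hA2σ : HasDerivAt (fun σ : ℝ =>
      (-2 * Cfn x0 M a p ρm ρp (0, σ) / gfn x0 M sg a p ρm ρp (0, σ))
        / (a (x0 + σ) * (ρp (x0 + σ) - ρm (x0 + σ))))
      (-(deriv a x0 * (M / (a x0 * ρm x0)) / (2 * a x0))) 0 := by
    have h := hA1σ.div hden8 hden80
    refine h.congr_deriv ?_
    beta_reduce
    rw [hA100]
    simp only [add_zero, mul_zero, zero_mul, sub_zero]
    field_simp
  refine ⟨U, hUo.mem_nhds h00U,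
    fun r σ => -2 * Cfn x0 M a p ρm ρp (r, σ) / gfn x0 M sg a p ρm ρp (r, σ),
    ?_, hA100, hroot, hA1r, hA1σ, ?_, hA2r, hA2σ⟩
  case refine_2 =>
    show -2 * Cfn x0 M a p ρm ρp ((0:ℝ), (0:ℝ)) / gfn x0 M sg a p ρm ρp (0, 0)
      / (a x0 * (ρp x0 - ρm x0)) = 0
    rw [hA100, zero_div]
  have hfe : (fun q : ℝ × ℝ => -2 * Cfn x0 M a p ρm ρp (q.1, q.2) / gfn x0 M sg a p ρm ρp (q.1, q.2))
      = fun q : ℝ × ℝ => -2 * Cfn x0 M a p ρm ρp q / gfn x0 M sg a p ρm ρp q := by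
    funext q
    rw [Prod.mk.eta]
  rw [hfe]
  exact hA1CD
end
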